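/- Let W, Ŵ ∈ ℝ^{n×n} be nonnegative with Ŵ obtained from W by appending edges (Ŵ_{ij} ≥ W_{ij} for all i, j, and Ŵ_{ij} = W_{ij} whenever W_{ij} > 0), with all row sums of W positive and all column sums of Ŵ positive, and let P, P̂ be the transition matrices, R = P̂ − P, ρ = max_i (d̂_i^out − d_i^out)/d_i^out, and σ = max over (i,j) with Ŵ_{ij} > 0 of d̂_j^in/d̂_i^out. Suppose W is the weight matrix of a block-cycle with k blocks and block membership map τ, and let f ∈ ℝ^n be a nonnegative left eigenvector of P for eigenvalue 1 with ‖f‖₁ = 1 (the Perron vector). Fix l ∈ {0, ..., k−1} and define u^l_j = (1/√n)·exp(−2πi·l·τ(j)/k) and y^l_j = (f_j/‖f‖₂)·exp(−2πi·l·τ(j)/k). Then the first-order eigenvalue perturbation term satisfies |(y^l)^H R u^l| / |(y^l)^H u^l| ≤ √(2n)·‖f‖₂·σ^{1/2}·ρ^{1/2}. -/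

import Mathlib

/-!
Since `u` and `y` carry the same phases, `yᴴ u = (∑ f_j) / (√n ‖f‖₂) = 1 / (√n ‖f‖₂)`, while the
triangle inequality bounds `|yᴴ R u|` by `(∑_{ij} f_i |R_ij|) / (√n ‖f‖₂)`; so the quotient is at
most `∑_{ij} f_i |R_ij|`.

On the support of `W` the entry `R_ij` is `W_ij (1/d̂_i − 1/d_i)`, elsewhere it is `Ŵ_ij / d̂_i`,
so `|R_ij| d̂_i = W_ij (d̂_i − d_i)/d_i + (Ŵ_ij − W_ij)`. Hence the rows of `|R|` sum to
`2 (d̂_i − d_i)/d̂_i ≤ 2ρ/(1+ρ)`, and `∑_i |R_ij| d̂_i ≤ (1+ρ) d̂_j^in`. Cauchy–Schwarz with the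
weights `d̂_j^in / d̂_i^out`, which are at most `σ` wherever `R_ij ≠ 0`, turns these two bounds
into `(∑_{ij} f_i |R_ij|)² ≤ 2 σ ρ n ‖f‖₂²`.
-/

open Matrix Complex

noncomputable def transitionMatrix {ι : Type*} [Fintype ι] (W : Matrix ι ι ℝ) : Matrix ι ι ℝ :=
  Matrix.of fun i j => W i j / ∑ t, W i t

@[simp]
theorem transitionMatrix_apply {ι : Type*} [Fintype ι] (W : Matrix ι ι ℝ) (i j : ι) :
    transitionMatrix W i j = W i j / ∑ t, W i t :=
  rfl

structure AppendsEdges {ι : Type*} (W Ŵ : Matrix ι ι ℝ) : Prop where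
  nonneg : ∀ i j, 0 ≤ W i j
  le : ∀ i j, W i j ≤ Ŵ i j
  eq_of_pos : ∀ i j, 0 < W i j → Ŵ i j = W i j

namespace AppendsEdges

variable {ι : Type*} [Fintype ι] {W Ŵ : Matrix ι ι ℝ} {ρ : ℝ}

theorem rowSum_le (h : AppendsEdges W Ŵ) (i : ι) : ∑ t, W i t ≤ ∑ t, Ŵ i t :=
  Finset.sum_le_sum fun t _ => h.le i t

theorem rowSum_sub_div_nonneg (h : AppendsEdges W Ŵ) (hdeg : ∀ i, 0 < ∑ t, W i t) (i : ι) :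
    0 ≤ (∑ t, Ŵ i t - ∑ t, W i t) / ∑ t, W i t :=
  div_nonneg (sub_nonneg.2 (h.rowSum_le i)) (hdeg i).le

theorem pos_of_abs_transitionMatrix_sub_pos (h : AppendsEdges W Ŵ) {i j : ι}
    (hij : 0 < |(transitionMatrix Ŵ - transitionMatrix W) i j|) : 0 < Ŵ i j := by
  refine ((h.nonneg i j).trans (h.le i j)).lt_of_ne' fun hŴ => ?_
  have hW : W i j = 0 := le_antisymm (hŴ ▸ h.le i j) (h.nonneg i j)
  simp [hŴ, hW] at hij

theorem abs_transitionMatrix_sub_mul_rowSum (h : AppendsEdges W Ŵ)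
    (hdeg : ∀ i, 0 < ∑ t, W i t) (i j : ι) :
    |(transitionMatrix Ŵ - transitionMatrix W) i j| * ∑ t, Ŵ i t =
      W i j * ((∑ t, Ŵ i t - ∑ t, W i t) / ∑ t, W i t) + (Ŵ i j - W i j) := by
  have hd := hdeg i
  have hd' : 0 < ∑ t, Ŵ i t := hd.trans_le (h.rowSum_le i)
  rw [Matrix.sub_apply, transitionMatrix_apply, transitionMatrix_apply]
  rcases (h.nonneg i j).eq_or_lt with hW | hW
  · rw [← hW, zero_div, sub_zero, abs_of_nonneg (div_nonneg (hW ▸ h.le i j) hd'.le)]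
    field_simp
    ring
  · rw [h.eq_of_pos i j hW, sub_self, add_zero,
      abs_of_nonpos (sub_nonpos.2 (div_le_div_of_nonneg_left hW.le hd (h.rowSum_le i)))]
    field_simp
    ring

theorem sum_abs_transitionMatrix_sub_le (h : AppendsEdges W Ŵ) (hdeg : ∀ i, 0 < ∑ t, W i t)
    (hρ : ∀ i, (∑ t, Ŵ i t - ∑ t, W i t) / ∑ t, W i t ≤ ρ) (i : ι) :
    ∑ j, |(transitionMatrix Ŵ - transitionMatrix W) i j| ≤ 2 * ρ / (1 + ρ) := by
  have hd := hdeg i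
  have hd' : 0 < ∑ t, Ŵ i t := hd.trans_le (h.rowSum_le i)
  have hρ0 : 0 ≤ ρ := (h.rowSum_sub_div_nonneg hdeg i).trans (hρ i)
  have hgap : ∑ t, Ŵ i t - ∑ t, W i t ≤ ρ * ∑ t, W i t := (div_le_iff₀ hd).1 (hρ i)
  have hsum : (∑ j, |(transitionMatrix Ŵ - transitionMatrix W) i j|) * ∑ t, Ŵ i t =
      2 * (∑ t, Ŵ i t - ∑ t, W i t) := by
    rw [Finset.sum_mul,
      Finset.sum_congr rfl fun j _ => h.abs_transitionMatrix_sub_mul_rowSum hdeg i j,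
      Finset.sum_add_distrib, ← Finset.sum_mul, Finset.sum_sub_distrib]
    field_simp
    ring
  rw [← eq_div_iff hd'.ne'] at hsum
  rw [hsum, div_le_div_iff₀ hd' (by linarith)]
  nlinarith

theorem sum_abs_transitionMatrix_sub_mul_rowSum_le (h : AppendsEdges W Ŵ)
    (hdeg : ∀ i, 0 < ∑ t, W i t) (hρ : ∀ i, (∑ t, Ŵ i t - ∑ t, W i t) / ∑ t, W i t ≤ ρ)
    (j : ι) :
    ∑ i, |(transitionMatrix Ŵ - transitionMatrix W) i j| * ∑ t, Ŵ i t ≤ (1 + ρ) * ∑ i, Ŵ i j := by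
  have hρ0 : 0 ≤ ρ := (h.rowSum_sub_div_nonneg hdeg j).trans (hρ j)
  calc ∑ i, |(transitionMatrix Ŵ - transitionMatrix W) i j| * ∑ t, Ŵ i t
      ≤ ∑ i, (ρ * W i j + (Ŵ i j - W i j)) := by
        gcongr with i
        rw [h.abs_transitionMatrix_sub_mul_rowSum hdeg i j, mul_comm ρ]
        gcongr
        · exact h.nonneg i j
        · exact hρ i
    _ = ρ * ∑ i, W i j + (∑ i, Ŵ i j - ∑ i, W i j) := by
        rw [Finset.sum_add_distrib, ← Finset.mul_sum, Finset.sum_sub_distrib]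
    _ ≤ (1 + ρ) * ∑ i, Ŵ i j := by
        have hle : ∑ i, W i j ≤ ∑ i, Ŵ i j := Finset.sum_le_sum fun i _ => h.le i j
        have hnonneg : 0 ≤ ∑ i, W i j := Finset.sum_nonneg fun i _ => h.nonneg i j
        nlinarith [mul_le_mul_of_nonneg_left hle hρ0]

end AppendsEdges

theorem sum_sq_pos_of_sum_ne_zero {ι : Type*} [Fintype ι] {f : ι → ℝ} (h : ∑ i, f i ≠ 0) :
    0 < ∑ i, f i ^ 2 :=
  let ⟨j, _, hj⟩ := Finset.exists_ne_zero_of_sum_ne_zero h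
  Finset.sum_pos' (fun i _ => sq_nonneg (f i)) ⟨j, Finset.mem_univ j, pow_two_pos_of_ne_zero hj⟩

theorem sq_sum_mul_le_of_schur_bounds {ι : Type*} [Fintype ι] (A : Matrix ι ι ℝ)
    (f a b : ι → ℝ) {σ α β : ℝ} (hA : ∀ i j, 0 ≤ A i j) (ha : ∀ i, 0 < a i)
    (hb : ∀ j, 0 < b j) (hσ0 : 0 ≤ σ) (hσ : ∀ i j, 0 < A i j → b j ≤ σ * a i)
    (hrow : ∀ i, ∑ j, A i j ≤ α) (hcol : ∀ j, ∑ i, A i j * a i ≤ β * b j) :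
    (∑ i, ∑ j, f i * A i j) ^ 2 ≤ σ * α * β * (∑ i, f i ^ 2) * Fintype.card ι := by
  set X := ∑ p : ι × ι, f p.1 ^ 2 * A p.1 p.2 * (b p.2 / a p.1)
  set Y := ∑ p : ι × ι, A p.1 p.2 * (a p.1 / b p.2) with hY_def
  have hx (p : ι × ι) : 0 ≤ f p.1 ^ 2 * A p.1 p.2 * (b p.2 / a p.1) :=
    mul_nonneg (mul_nonneg (sq_nonneg _) (hA _ _)) (div_nonneg (hb _).le (ha _).le)
  have hy (p : ι × ι) : 0 ≤ A p.1 p.2 * (a p.1 / b p.2) :=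
    mul_nonneg (hA _ _) (div_nonneg (ha _).le (hb _).le)
  have hX0 : 0 ≤ X := Finset.sum_nonneg fun p _ => hx p
  have hY0 : 0 ≤ Y := Finset.sum_nonneg fun p _ => hy p
  have hcs : (∑ i, ∑ j, f i * A i j) ^ 2 ≤ X * Y := by
    rw [← Fintype.sum_prod_type' (fun i j => f i * A i j)]
    refine Finset.sum_sq_le_sum_mul_sum_of_sq_le_mul _ (fun p _ => hx p) (fun p _ => hy p)
      fun p _ => le_of_eq ?_
    have := (ha p.1).ne'
    have := (hb p.2).ne'
    field_simp
  have hX : X ≤ σ * α * ∑ i, f i ^ 2 := by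
    calc X ≤ ∑ p : ι × ι, σ * f p.1 ^ 2 * A p.1 p.2 := by
          refine Finset.sum_le_sum fun p _ => ?_
          rcases (hA p.1 p.2).eq_or_lt with h | h
          · simp [← h]
          · have := (div_le_iff₀ (ha p.1)).2 (hσ p.1 p.2 h)
            calc f p.1 ^ 2 * A p.1 p.2 * (b p.2 / a p.1) ≤ f p.1 ^ 2 * A p.1 p.2 * σ := by
                  gcongr
              _ = _ := by ring
      _ = ∑ i, σ * f i ^ 2 * ∑ j, A i j := by simp only [Fintype.sum_prod_type, Finset.mul_sum]
      _ ≤ ∑ i, σ * f i ^ 2 * α := by gcongr with i; exact hrow i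
      _ = σ * α * ∑ i, f i ^ 2 := by
          rw [Finset.mul_sum]; exact Finset.sum_congr rfl fun i _ => by ring
  have hY : Y ≤ β * Fintype.card ι := by
    calc Y = ∑ j, (∑ i, A i j * a i) / b j := by
          rw [hY_def, Fintype.sum_prod_type_right]; simp only [Finset.sum_div, mul_div_assoc]
      _ ≤ ∑ _j : ι, β := Finset.sum_le_sum fun j _ => (div_le_iff₀ (hb j)).2 (hcol j)
      _ = β * Fintype.card ι := by simp [mul_comm]
  calc (∑ i, ∑ j, f i * A i j) ^ 2 ≤ X * Y := hcs
    _ ≤ (σ * α * ∑ i, f i ^ 2) * (β * Fintype.card ι) := mul_le_mul hX hY hY0 (hX0.trans hX)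
    _ = _ := by ring

theorem norm_star_dotProduct_mulVec_le {ι R : Type*} [Fintype ι] [NormedRing R] [StarRing R]
    [NormedStarGroup R] (y u : ι → R) (M : Matrix ι ι R) :
    ‖star y ⬝ᵥ (M *ᵥ u)‖ ≤ ∑ i, ∑ j, ‖y i‖ * ‖M i j‖ * ‖u j‖ := by
  simp only [dotProduct, mulVec, Pi.star_apply, Finset.mul_sum]
  refine (norm_sum_le _ _).trans (Finset.sum_le_sum fun i _ => (norm_sum_le _ _).trans ?_)
  refine Finset.sum_le_sum fun j _ => ?_
  calc ‖star (y i) * (M i j * u j)‖ ≤ ‖star (y i)‖ * (‖M i j‖ * ‖u j‖) :=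
        (norm_mul_le _ _).trans (by gcongr; exact norm_mul_le _ _)
    _ = ‖y i‖ * ‖M i j‖ * ‖u j‖ := by rw [norm_star, mul_assoc]

theorem norm_star_dotProduct_mulVec_div_le_of_common_phase {ι : Type*} [Fintype ι]
    (M : Matrix ι ι ℂ) (a : ι → ℝ) (ha : ∀ i, 0 ≤ a i) (c : ℂ) (e : ι → ℂ)
    (he : ∀ j, ‖e j‖ = 1) :
    ‖star (fun i => (a i : ℂ) * e i) ⬝ᵥ (M *ᵥ fun j => c * e j)‖ /
        ‖star (fun i => (a i : ℂ) * e i) ⬝ᵥ fun j => c * e j‖ ≤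
      (∑ i, ∑ j, a i * ‖M i j‖) / ∑ i, a i := by
  have hden : star (fun i => (a i : ℂ) * e i) ⬝ᵥ (fun j => c * e j) = ((∑ i, a i : ℝ) : ℂ) * c := by
    simp only [dotProduct, Pi.star_apply, Complex.star_def, map_mul, conj_ofReal, ofReal_sum,
      Finset.sum_mul]
    refine Finset.sum_congr rfl fun i _ => ?_
    calc (a i : ℂ) * (starRingEnd ℂ) (e i) * (c * e i)
        = a i * c * ((starRingEnd ℂ) (e i) * e i) := by ring
      _ = a i * c := by rw [conj_mul', he, ofReal_one, one_pow, mul_one]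
  have hnum := norm_star_dotProduct_mulVec_le (fun i => (a i : ℂ) * e i) (fun j => c * e j) M
  simp only [norm_mul, he, norm_real, Real.norm_of_nonneg (ha _), mul_one] at hnum
  have hsum_nonneg : 0 ≤ ∑ i, a i := Finset.sum_nonneg fun i _ => ha i
  rw [hden, norm_mul, norm_real, Real.norm_of_nonneg hsum_nonneg]
  calc _ ≤ ((∑ i, ∑ j, a i * ‖M i j‖) * ‖c‖) / ((∑ i, a i) * ‖c‖) := by
        refine div_le_div_of_nonneg_right (hnum.trans_eq ?_) (by positivity)
        simp only [Finset.sum_mul]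
    _ ≤ _ := by
        rcases (norm_nonneg c).eq_or_lt with hc | hc
        · rw [← hc, mul_zero, zero_div]
          exact div_nonneg (Finset.sum_nonneg fun i _ => Finset.sum_nonneg fun j _ =>
            mul_nonneg (ha i) (norm_nonneg _)) hsum_nonneg
        · rw [mul_div_mul_right _ _ hc.ne']

theorem first_order_eigenvalue_perturbation_bound_general
    {n k : ℕ}
    (W What : Matrix (Fin n) (Fin n) ℝ)
    (hWnonneg : ∀ i j, 0 ≤ W i j)
    (hle : ∀ i j, W i j ≤ What i j)
    (hsupp : ∀ i j, 0 < W i j → What i j = W i j)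
    (hdeg : ∀ i, 0 < ∑ j, W i j)
    (hcol : ∀ j, 0 < ∑ i, What i j)
    (P Phat : Matrix (Fin n) (Fin n) ℝ)
    (hP : ∀ i j, P i j = W i j / ∑ t, W i t)
    (hPhat : ∀ i j, Phat i j = What i j / ∑ t, What i t)
    (R : Matrix (Fin n) (Fin n) ℝ) (hR : R = Phat - P)
    (ρ : ℝ)
    (hρ : IsGreatest (Set.range fun i : Fin n =>
      ((∑ j, What i j) - ∑ j, W i j) / ∑ j, W i j) ρ)
    (σ : ℝ)
    (hσ : IsGreatest {x : ℝ | ∃ i j, 0 < What i j ∧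
      x = (∑ s, What s j) / (∑ t, What i t)} σ)
    (τ : Fin n → ZMod k)
    (f : Fin n → ℝ) (hfnonneg : ∀ j, 0 ≤ f j)
    (hf1 : ∑ j, |f j| = 1)
    (l : ℕ)
    (u y : Fin n → ℂ)
    (hu : ∀ j, u j = (1 / (Real.sqrt n : ℂ)) *
      Complex.exp (-(2 * Real.pi * Complex.I * l * ((τ j).val : ℕ)) / k))
    (hy : ∀ j, y j = ((f j / Real.sqrt (∑ i, f i ^ 2) : ℝ) : ℂ) *
      Complex.exp (-(2 * Real.pi * Complex.I * l * ((τ j).val : ℕ)) / k)) :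
    ‖star y ⬝ᵥ ((R.map Complex.ofReal) *ᵥ u)‖ /
      ‖star y ⬝ᵥ u‖ ≤
    Real.sqrt (2 * n) * Real.sqrt (∑ i, f i ^ 2) * Real.sqrt σ * Real.sqrt ρ := by
  have hW : AppendsEdges W What := ⟨hWnonneg, hle, hsupp⟩
  obtain rfl : R = transitionMatrix What - transitionMatrix W := by
    ext i j; simp [hR, hP, hPhat]
  set R := transitionMatrix What - transitionMatrix W
  set F := ∑ i, f i ^ 2
  set e : Fin n → ℂ := fun j => Complex.exp (-(2 * Real.pi * Complex.I * l * ((τ j).val : ℕ)) / k)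
  obtain rfl : u = fun j => 1 / (Real.sqrt n : ℂ) * e j := funext hu
  obtain rfl : y = fun j => ((f j / Real.sqrt F : ℝ) : ℂ) * e j := funext hy
  have hsumf : ∑ j, f j = 1 := by simpa only [abs_of_nonneg (hfnonneg _)] using hf1
  have hF : Real.sqrt F ≠ 0 :=
    (Real.sqrt_pos.2 (sum_sq_pos_of_sum_ne_zero (hsumf.trans_ne one_ne_zero))).ne'
  have hrow_pos i : 0 < ∑ t, What i t := (hdeg i).trans_le (hW.rowSum_le i)
  have hρ0 : 0 ≤ ρ := by
    obtain ⟨i, rfl⟩ := hρ.1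
    exact hW.rowSum_sub_div_nonneg hdeg i
  have hσ0 : 0 ≤ σ := by
    obtain ⟨i, j, -, rfl⟩ := hσ.1
    exact div_nonneg (hcol j).le (hrow_pos i).le
  have hρ_bound i := hρ.2 ⟨i, rfl⟩
  have hσ_bound i j (hij : 0 < |R i j|) : ∑ s, What s j ≤ σ * ∑ t, What i t :=
    (div_le_iff₀ (hrow_pos i)).1 (hσ.2 ⟨i, j, hW.pos_of_abs_transitionMatrix_sub_pos hij, rfl⟩)
  have hS := sq_sum_mul_le_of_schur_bounds (fun i j => |R i j|) f _ _ (fun _ _ => abs_nonneg _)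
    hrow_pos hcol hσ0 hσ_bound (hW.sum_abs_transitionMatrix_sub_le hdeg hρ_bound)
    (hW.sum_abs_transitionMatrix_sub_mul_rowSum_le hdeg hρ_bound)
  have he j : ‖e j‖ = 1 := by rw [Complex.norm_exp]; simp
  calc _ ≤ (∑ i, ∑ j, f i / Real.sqrt F * ‖R.map ofReal i j‖) / ∑ i, f i / Real.sqrt F :=
        norm_star_dotProduct_mulVec_div_le_of_common_phase _ _
          (fun i => div_nonneg (hfnonneg i) (Real.sqrt_nonneg _)) _ _ he
    _ = ∑ i, ∑ j, f i * |R i j| := by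
        simp only [map_apply, norm_real, Real.norm_eq_abs, div_mul_eq_mul_div, ← Finset.sum_div,
          div_div_div_cancel_right₀ hF, hsumf, div_one]
    _ ≤ Real.sqrt (σ * (2 * ρ / (1 + ρ)) * (1 + ρ) * F * n) :=
        (le_abs_self _).trans (Real.abs_le_sqrt (by simpa only [Fintype.card_fin] using hS))
    _ = _ := by
        rw [show σ * (2 * ρ / (1 + ρ)) * (1 + ρ) * F * n = 2 * n * F * σ * ρ by field_simp,
          Real.sqrt_mul (by positivity), Real.sqrt_mul (by positivity),
          Real.sqrt_mul (by positivity)]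

/-- **First-order eigenvalue perturbation bound for cycle eigenvalues.**
With `Ŵ` obtained from the block-cycle `W` by appending edges, `P`, `P̂` the transition
matrices, `R = P̂ − P`, `ρ` and `σ` the perturbation parameters, `f` the Perron vector of `P`
(nonnegative left eigenvector for eigenvalue 1 with `‖f‖₁ = 1`), and for a fixed
`l ∈ {0, …, k−1}`, `u j = (1/√n)·exp(−2πi·l·τ(j)/k)` and
`y j = (f j/‖f‖₂)·exp(−2πi·l·τ(j)/k)`, the first-order eigenvalue perturbation term satisfies
`|yᴴ R u| / |yᴴ u| ≤ √(2n)·‖f‖₂·σ^(1/2)·ρ^(1/2)`. -/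
theorem first_order_eigenvalue_perturbation_bound
    {n k : ℕ} (hn : 0 < n) (hk : 2 ≤ k)
    (W What : Matrix (Fin n) (Fin n) ℝ)
    (hWnonneg : ∀ i j, 0 ≤ W i j)
    (hle : ∀ i j, W i j ≤ What i j)
    (hsupp : ∀ i j, 0 < W i j → What i j = W i j)
    (hdeg : ∀ i, 0 < ∑ j, W i j)
    (hcol : ∀ j, 0 < ∑ i, What i j)
    (P Phat : Matrix (Fin n) (Fin n) ℝ)
    (hP : ∀ i j, P i j = W i j / ∑ t, W i t)
    (hPhat : ∀ i j, Phat i j = What i j / ∑ t, What i t)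
    (R : Matrix (Fin n) (Fin n) ℝ) (hR : R = Phat - P)
    (ρ : ℝ)
    (hρ : IsGreatest (Set.range fun i : Fin n =>
      ((∑ j, What i j) - ∑ j, W i j) / ∑ j, W i j) ρ)
    (σ : ℝ)
    (hσ : IsGreatest {x : ℝ | ∃ i j, 0 < What i j ∧
      x = (∑ s, What s j) / (∑ t, What i t)} σ)
    (τ : Fin n → ZMod k) (hτsurj : Function.Surjective τ)
    (hblock : ∀ i j, 0 < W i j → τ j = τ i + 1)
    (f : Fin n → ℝ) (hfnonneg : ∀ j, 0 ≤ f j)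
    (hf : f ᵥ* P = f) (hf1 : ∑ j, |f j| = 1)
    (l : ℕ) (hl : l < k)
    (u y : Fin n → ℂ)
    (hu : ∀ j, u j = (1 / (Real.sqrt n : ℂ)) *
      Complex.exp (-(2 * Real.pi * Complex.I * l * ((τ j).val : ℕ)) / k))
    (hy : ∀ j, y j = ((f j / Real.sqrt (∑ i, f i ^ 2) : ℝ) : ℂ) *
      Complex.exp (-(2 * Real.pi * Complex.I * l * ((τ j).val : ℕ)) / k)) :
    ‖star y ⬝ᵥ ((R.map Complex.ofReal) *ᵥ u)‖ /
      ‖star y ⬝ᵥ u‖ ≤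
    Real.sqrt (2 * n) * Real.sqrt (∑ i, f i ^ 2) * Real.sqrt σ * Real.sqrt ρ :=
  first_order_eigenvalue_perturbation_bound_general W What hWnonneg hle hsupp hdeg hcol P Phat hP
    hPhat R hR ρ hρ σ hσ τ f hfnonneg hf1 l u y hu hy
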